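/- arXiv:1705.03980 — 3 statements merged into one kernel-verified Lean document; each statement's English description precedes it below -/
import Mathlib

section
/- Let R be a commutative ring and {M_i}_{i ∈ Λ} a family of R-modules. If there is an index i₀ ∈ Λ such that M_{i₀} is an Auslander R-module, then the direct sum ⨁_{i ∈ Λ} M_i is an Auslander R-module. -/
/-- The paper's `Z_R(M)`. -/
def zeroDivisorsOn (R : Type*) [CommRing R] (M : Type*) [AddCommGroup M] [Module R M] :
    Set R :=
  {r : R | ∃ m : M, m ≠ 0 ∧ r • m = 0}

open DirectSum

theorem zeroDivisorsOn_subset_of_injective {R M N : Type*} [CommRing R]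
    [AddCommGroup M] [Module R M] [AddCommGroup N] [Module R N]
    (f : M →ₗ[R] N) (hf : Function.Injective f) :
    zeroDivisorsOn R M ⊆ zeroDivisorsOn R N := by
  rintro r ⟨m, hm, hrm⟩
  exact ⟨f m, (map_ne_zero_iff f hf).mpr hm, by rw [← map_smul, hrm, map_zero]⟩

theorem directSum_auslander_general (R : Type*) [CommRing R]
    {ι : Type*} (M : ι → Type*)
    [∀ i, AddCommGroup (M i)] [∀ i, Module R (M i)] (i₀ : ι)
    (h : zeroDivisorsOn R R ⊆ zeroDivisorsOn R (M i₀)) :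
    zeroDivisorsOn R R ⊆ zeroDivisorsOn R (⨁ i, M i) := by
  classical
  exact h.trans <| zeroDivisorsOn_subset_of_injective (lof R ι M i₀) (of_injective i₀)

/-- If some member of a family of modules is Auslander, then the direct sum is Auslander. -/
theorem directSum_auslander (R : Type*) [CommRing R]
    {ι : Type*} [DecidableEq ι] (M : ι → Type*)
    [∀ i, AddCommGroup (M i)] [∀ i, Module R (M i)] (i₀ : ι)
    (h : zeroDivisorsOn R R ⊆ zeroDivisorsOn R (M i₀)) :
    zeroDivisorsOn R R ⊆ zeroDivisorsOn R (⨁ i, M i) :=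
  directSum_auslander_general R M i₀ h
end

section
/- Let R be a commutative ring, M a flat Auslander R-module, and M′ any flat R-module. Then M ⊕ M′ is both torsion-free and Auslander as an R-module, i.e., Z_R(M ⊕ M′) = Z_R(R). -/
/-! `M ⊕ M'` is flat, hence torsion-free in the sense of `Module.IsTorsionFree`: a
non-zero-divisor of `R` acts injectively on it. Conversely, the zero-divisors of `R` on `M`
survive in `M ⊕ M'` through the inclusion of the first summand. -/

section ZeroDivisorsOn

variable {R : Type*} [CommRing R] {M N : Type*} [AddCommGroup M] [Module R M]
  [AddCommGroup N] [Module R N]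

theorem notMem_zeroDivisorsOn_iff {r : R} : r ∉ zeroDivisorsOn R M ↔ IsSMulRegular M r := by
  rw [isSMulRegular_iff_right_eq_zero_of_smul]
  simp only [zeroDivisorsOn, Set.mem_ofPred_eq, not_exists, not_and]
  exact forall_congr' fun _ ↦ not_imp_not

theorem zeroDivisorsOn_mono_of_injective (f : M →ₗ[R] N) (hf : Function.Injective f) :
    zeroDivisorsOn R M ⊆ zeroDivisorsOn R N := by
  rintro r ⟨m, hm, hrm⟩
  exact ⟨f m, (map_ne_zero_iff f hf).mpr hm, by rw [← map_smul, hrm, map_zero]⟩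

theorem zeroDivisorsOn_subset_self_of_isTorsionFree [Module.IsTorsionFree R M] :
    zeroDivisorsOn R M ⊆ zeroDivisorsOn R R := by
  intro r hrM
  by_contra hrR
  have hr : IsRegular r := isLeftRegular_iff_isRegular.mp (notMem_zeroDivisorsOn_iff.mp hrR)
  exact notMem_zeroDivisorsOn_iff.mpr hr.isSMulRegular hrM

end ZeroDivisorsOn

/-- If `M` is a flat Auslander module and `M'` is flat, then `M ⊕ M'` is torsion-free
and Auslander. -/
theorem prod_flat_torsionFree_auslander (R : Type*) [CommRing R]
    (M : Type*) [AddCommGroup M] [Module R M] [Module.Flat R M]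
    (M' : Type*) [AddCommGroup M'] [Module R M'] [Module.Flat R M']
    (hM : zeroDivisorsOn R R ⊆ zeroDivisorsOn R M) :
    zeroDivisorsOn R (M × M') = zeroDivisorsOn R R :=
  zeroDivisorsOn_subset_self_of_isTorsionFree.antisymm <|
    hM.trans (zeroDivisorsOn_mono_of_injective (LinearMap.inl R M M') LinearMap.inl_injective)
end

section
/- Let R be a commutative ring, M a flat Auslander R-module having property (A), and B a commutative R-algebra that is faithfully flat as an R-module. For f ∈ B, define the content c(f) to be the intersection of all ideals I of R such that f ∈ IB. Assume: (i) B is an Ohm-Rush R-algebra, i.e., f ∈ c(f)B for every f ∈ B; (ii) c(f) is a finitely generated ideal of R for every f ∈ B; (iii) B is a McCoy R-algebra, i.e., whenever f·g = 0 in B with g ≠ 0, there is a nonzero r ∈ R with c(f)·r = (0). Then the B-module M ⊗_R B is both torsion-free and Auslander, i.e., Z_B(M ⊗_R B) = Z_B(B). -/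
/-- An `R`-module `M` has property (A) if every finitely generated ideal `I ⊆ Z_R(M)`
has a nonzero annihilator in `M`. -/
def hasPropertyA (R : Type*) [CommRing R] (M : Type*) [AddCommGroup M] [Module R M] :
    Prop :=
  ∀ I : Ideal R, I.FG → (I : Set R) ⊆ zeroDivisorsOn R M →
    ∃ m : M, m ≠ 0 ∧ ∀ r ∈ I, r • m = 0


/-- The content `c(f)` of an element `f` of an `R`-algebra `B`: the intersection of all
ideals `I` of `R` such that `f ∈ IB`. -/
noncomputable def algContent (R : Type*) (B : Type*) [CommRing R] [CommRing B]
    [Algebra R B] (f : B) : Ideal R :=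
  sInf {I : Ideal R | f ∈ Ideal.map (algebraMap R B) I}

/-!
Torsion-freeness is flat base change of regularity: if `f` is regular on `B`, then
`f • -` on `B ⊗[R] M` is `(f • -) ⊗ M`, injective because `M` is flat.

For the Auslander property, let `f g = 0` with `g ≠ 0`. By McCoy some `r ≠ 0` kills `c(f)`, so
`c(f) ⊆ Z_R(R) ⊆ Z_R(M)`; as `c(f)` is finitely generated, property (A) gives `m ≠ 0` in `M`
killed by `c(f)`. Then `c(f)B` kills `1 ⊗ m`, which is nonzero by faithful flatness, and
`f ∈ c(f)B` by the Ohm–Rush property.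
-/

open TensorProduct

lemma notMem_zeroDivisorsOn_iff_isSMulRegular {R M : Type*} [CommRing R] [AddCommGroup M]
    [Module R M] {r : R} : r ∉ zeroDivisorsOn R M ↔ IsSMulRegular M r := by
  simp [zeroDivisorsOn, isSMulRegular_iff_right_eq_zero_of_smul, not_imp_not]

theorem zeroDivisorsOn_tensorProduct_subset (R M B : Type*) [CommRing R] [AddCommGroup M]
    [Module R M] [Module.Flat R M] [CommRing B] [Algebra R B] :
    zeroDivisorsOn B (B ⊗[R] M) ⊆ zeroDivisorsOn B B := by
  intro f
  contrapose
  simp only [notMem_zeroDivisorsOn_iff_isSMulRegular]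
  exact Module.Flat.rTensor_preserves_injective_linearMap (Algebra.lsmul R R B f)

section Auslander

variable {R M B : Type*} [CommRing R] [AddCommGroup M] [Module R M] [CommRing B] [Algebra R B]

theorem smul_one_tmul_eq_zero_of_mem_map {I : Ideal R} {m : M} (hI : ∀ a ∈ I, a • m = 0)
    {f : B} (hf : f ∈ I.map (algebraMap R B)) : f • ((1 : B) ⊗ₜ[R] m) = 0 := by
  have hle : I.map (algebraMap R B) ≤ (B ∙ (1 : B) ⊗ₜ[R] m).annihilator := by
    refine Ideal.map_le_iff_le_comap.mpr fun a ha => ?_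
    rw [Ideal.mem_comap, Submodule.mem_annihilator_span_singleton, algebraMap_smul,
      ← tmul_smul, hI a ha, tmul_zero]
  exact (Submodule.mem_annihilator_span_singleton _ _).mp (hle hf)

theorem algContent_subset_zeroDivisorsOn (hM : zeroDivisorsOn R R ⊆ zeroDivisorsOn R M)
    (hMcCoy : ∀ f g : B, f * g = 0 → g ≠ 0 →
      ∃ r : R, r ≠ 0 ∧ ∀ a ∈ algContent R B f, a * r = 0)
    {f : B} (hf : f ∈ zeroDivisorsOn B B) :
    (algContent R B f : Set R) ⊆ zeroDivisorsOn R M := by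
  obtain ⟨g, hg, hfg⟩ := hf
  obtain ⟨r, hr, hcr⟩ := hMcCoy f g hfg hg
  exact fun a ha => hM ⟨r, hr, hcr a ha⟩

theorem zeroDivisorsOn_subset_tensorProduct [Module.FaithfullyFlat R B]
    (hM : zeroDivisorsOn R R ⊆ zeroDivisorsOn R M) (hA : hasPropertyA R M)
    (hOhmRush : ∀ f : B, f ∈ Ideal.map (algebraMap R B) (algContent R B f))
    (hFG : ∀ f : B, (algContent R B f).FG)
    (hMcCoy : ∀ f g : B, f * g = 0 → g ≠ 0 →
      ∃ r : R, r ≠ 0 ∧ ∀ a ∈ algContent R B f, a * r = 0) :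
    zeroDivisorsOn B B ⊆ zeroDivisorsOn B (B ⊗[R] M) := by
  intro f hf
  obtain ⟨m, hm, hann⟩ :=
    hA _ (hFG f) (algContent_subset_zeroDivisorsOn hM hMcCoy hf)
  exact ⟨(1 : B) ⊗ₜ[R] m, (Module.FaithfullyFlat.one_tmul_eq_zero_iff R M m).not.mpr hm,
    smul_one_tmul_eq_zero_of_mem_map hann (hOhmRush f)⟩

end Auslander

/-- If `M` is a flat Auslander `R`-module with property (A) and `B` is a faithfully flat
McCoy (Ohm-Rush) `R`-algebra, then `M ⊗_R B` is a torsion-free Auslander `B`-module. -/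
theorem tensor_torsionFree_auslander (R : Type*) [CommRing R]
    (M : Type*) [AddCommGroup M] [Module R M] [Module.Flat R M]
    (B : Type*) [CommRing B] [Algebra R B]
    (hM : zeroDivisorsOn R R ⊆ zeroDivisorsOn R M)
    (hA : hasPropertyA R M)
    (hff : Module.FaithfullyFlat R B)
    (hOhmRush : ∀ f : B, f ∈ Ideal.map (algebraMap R B) (algContent R B f))
    (hFG : ∀ f : B, (algContent R B f).FG)
    (hMcCoy : ∀ f g : B, f * g = 0 → g ≠ 0 →
      ∃ r : R, r ≠ 0 ∧ ∀ a ∈ algContent R B f, a * r = 0) :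
    zeroDivisorsOn B (B ⊗[R] M) = zeroDivisorsOn B B :=
  (zeroDivisorsOn_tensorProduct_subset R M B).antisymm
    (zeroDivisorsOn_subset_tensorProduct hM hA hOhmRush hFG hMcCoy)
end
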